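/- The space of vector polynomials p of degree at most ℓ+1 on ℝ² satisfying div σ(p) = 0, where σ(p) = 2μ ε(p) + λ (tr ε(p)) I with ε(p) the symmetric gradient and μ > 0, λ + μ > 0, has dimension 4ℓ + 6. -/

import Mathlib

open MvPolynomial

/-- The symmetric gradient (small strain) of a polynomial vector field on ℝ². -/
noncomputable def polyStrain (p : Fin 2 → MvPolynomial (Fin 2) ℝ) (i j : Fin 2) :
    MvPolynomial (Fin 2) ℝ :=
  C (1 / 2 : ℝ) * (pderiv i (p j) + pderiv j (p i))

/-- Isotropic elasticity stress σ(p) = 2μ ε(p) + λ (tr ε(p)) I. -/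
noncomputable def polyStress (μ lam : ℝ) (p : Fin 2 → MvPolynomial (Fin 2) ℝ)
    (i j : Fin 2) : MvPolynomial (Fin 2) ℝ :=
  C (2 * μ) * polyStrain p i j +
    if i = j then C lam * (polyStrain p 0 0 + polyStrain p 1 1) else 0

/-- Componentwise divergence of the stress, (div σ(p))ᵢ = Σⱼ ∂ⱼ σ(p)ᵢⱼ. -/
noncomputable def polyDivStress (μ lam : ℝ) (p : Fin 2 → MvPolynomial (Fin 2) ℝ)
    (i : Fin 2) : MvPolynomial (Fin 2) ℝ :=
  ∑ j : Fin 2, pderiv j (polyStress μ lam p i j)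

/-!
Writing `div σ(p) = μ Δp + (λ + μ) ∇(div p) =: L p`, the space in question is the kernel of `L`
on `[P_{ℓ+1}]²`. If `μ ≠ 0` and `λ + 2μ ≠ 0`, then `L` maps `[P_{n+2}]²` onto `[P_n]²`: given `f`,
solve `Δu = f` and `Δv = div u` degree-wise, and take `p = μ⁻¹ u + c ∇v` with `c` chosen so that
the gradient terms of `L p` cancel. The Laplacian is onto `P_n` from `P_{n+2}` by induction on the
exponent of `y`, since `Δ(x^{a+2} y^b) = (a+2)(a+1) x^a y^b + b(b-1) x^{a+2} y^{b-2}`.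
Rank–nullity then gives `(ℓ+2)(ℓ+3) - ℓ(ℓ+1) = 4ℓ + 6`; for `ℓ = 0` the second-order operator `L`
vanishes on `[P_1]²`, of dimension `6`.
-/

namespace Submodule

section

variable {R ι : Type*} [Semiring R] {φ : ι → Type*} [∀ i, AddCommMonoid (φ i)]
  [∀ i, Module R (φ i)]

def piUnivEquiv (p : ∀ i, Submodule R (φ i)) : pi Set.univ p ≃ₗ[R] ∀ i, p i where
  toFun x i := ⟨x.1 i, x.2 i (Set.mem_univ i)⟩
  invFun y := ⟨fun i => y i, fun i _ => (y i).2⟩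
  map_add' _ _ := rfl
  map_smul' _ _ := rfl
  left_inv _ := rfl
  right_inv _ := rfl

instance [Finite ι] (p : ∀ i, Submodule R (φ i)) [∀ i, Module.Finite R (p i)] :
    Module.Finite R (pi Set.univ p) :=
  Module.Finite.equiv (piUnivEquiv p).symm

end

theorem finrank_pi_univ {K ι : Type*} [Field K] [Fintype ι] {φ : ι → Type*}
    [∀ i, AddCommGroup (φ i)] [∀ i, Module K (φ i)] (p : ∀ i, Submodule K (φ i))
    [∀ i, Module.Finite K (p i)] :
    Module.finrank K (pi Set.univ p) = ∑ i, Module.finrank K (p i) := by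
  rw [(piUnivEquiv p).finrank_eq, Module.finrank_pi_fintype]

theorem finrank_inf_ker_add_finrank_map {K V W : Type*} [Field K]
    [AddCommGroup V] [Module K V] [AddCommGroup W] [Module K W] (P : Submodule K V)
    [Module.Finite K P] (f : V →ₗ[K] W) :
    Module.finrank K ↥(P ⊓ LinearMap.ker f) + Module.finrank K ↥(P.map f) =
      Module.finrank K P := by
  rw [← LinearMap.range_domRestrict, ← (f.domRestrict P).finrank_range_add_finrank_ker,
    add_comm, LinearMap.ker_domRestrict,
    ← (comapSubtypeEquivOfLe (inf_le_left : P ⊓ LinearMap.ker f ≤ P)).finrank_eq, comap_inf,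
    comap_subtype_self, top_inf_eq]

end Submodule

namespace MvPolynomial

section CommSemiring

variable {σ R : Type*} [CommSemiring R] {n : ℕ}

theorem pderiv_mem_restrictTotalDegree {f : MvPolynomial σ R} (i : σ)
    (hf : f ∈ restrictTotalDegree σ R (n + 1)) : pderiv i f ∈ restrictTotalDegree σ R n := by
  rw [mem_restrictTotalDegree] at hf ⊢
  refine Finset.sup_le fun m hm => ?_
  rw [mem_support_iff, coeff_pderiv] at hm
  have h := (le_totalDegree (mem_support_iff.mpr (left_ne_zero_of_mul hm))).trans hf
  change (m + Finsupp.single i 1).degree ≤ n + 1 at h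
  rw [map_add, Finsupp.degree_single] at h
  exact Nat.le_of_add_le_add_right h

theorem pderiv_eq_zero_of_mem_restrictTotalDegree_zero {f : MvPolynomial σ R} (i : σ)
    (hf : f ∈ restrictTotalDegree σ R 0) : pderiv i f = 0 := by
  rw [totalDegree_eq_zero_iff_eq_C.mp (Nat.le_zero.mp ((mem_restrictTotalDegree _ _ _).mp hf)),
    pderiv_C]

variable (σ R) in
noncomputable abbrev restrictTotalDegreePi (n : ℕ) : Submodule R (σ → MvPolynomial σ R) :=
  Submodule.pi Set.univ fun _ => restrictTotalDegree σ R n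

variable [Fintype σ]

noncomputable def laplacian : MvPolynomial σ R →ₗ[R] MvPolynomial σ R :=
  ∑ i, (pderiv i).toLinearMap ∘ₗ (pderiv i).toLinearMap

noncomputable def divergence : (σ → MvPolynomial σ R) →ₗ[R] MvPolynomial σ R :=
  ∑ i, (pderiv i).toLinearMap ∘ₗ LinearMap.proj i

noncomputable def lameOperator (μ lam : R) :
    (σ → MvPolynomial σ R) →ₗ[R] σ → MvPolynomial σ R :=
  LinearMap.pi fun i =>
    μ • (laplacian ∘ₗ LinearMap.proj i) + (lam + μ) • ((pderiv i).toLinearMap ∘ₗ divergence)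

theorem laplacian_apply (f : MvPolynomial σ R) : laplacian f = ∑ i, pderiv i (pderiv i f) := by
  simp [laplacian]

theorem divergence_apply (p : σ → MvPolynomial σ R) : divergence p = ∑ i, pderiv i (p i) := by
  simp [divergence]

theorem lameOperator_apply (μ lam : R) (p : σ → MvPolynomial σ R) (i : σ) :
    lameOperator μ lam p i = μ • laplacian (p i) + (lam + μ) • pderiv i (divergence p) :=
  rfl

theorem divergence_pderiv (f : MvPolynomial σ R) :
    divergence (fun i => pderiv i f) = laplacian f := by
  rw [divergence_apply, laplacian_apply]

theorem laplacian_mem_restrictTotalDegree {f : MvPolynomial σ R}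
    (hf : f ∈ restrictTotalDegree σ R (n + 2)) : laplacian f ∈ restrictTotalDegree σ R n := by
  rw [laplacian_apply]
  exact Submodule.sum_mem _ fun i _ =>
    pderiv_mem_restrictTotalDegree i (pderiv_mem_restrictTotalDegree i hf)

theorem divergence_mem_restrictTotalDegree {p : σ → MvPolynomial σ R}
    (hp : p ∈ restrictTotalDegreePi σ R (n + 1)) : divergence p ∈ restrictTotalDegree σ R n := by
  rw [divergence_apply]
  exact Submodule.sum_mem _ fun i _ => pderiv_mem_restrictTotalDegree i (hp i trivial)

theorem map_lameOperator_restrictTotalDegreePi_le (μ lam : R) :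
    (restrictTotalDegreePi σ R (n + 2)).map (lameOperator μ lam) ≤
      restrictTotalDegreePi σ R n := by
  rintro _ ⟨p, hp, rfl⟩ i -
  rw [lameOperator_apply]
  exact add_mem (Submodule.smul_mem _ _ (laplacian_mem_restrictTotalDegree (hp i trivial)))
    (Submodule.smul_mem _ _ (pderiv_mem_restrictTotalDegree i
      (divergence_mem_restrictTotalDegree hp)))

theorem restrictTotalDegreePi_one_le_ker_lameOperator (μ lam : R) :
    restrictTotalDegreePi σ R 1 ≤ LinearMap.ker (lameOperator μ lam) := by
  have h : ∀ {f : MvPolynomial σ R} (i j : σ), f ∈ restrictTotalDegree σ R 1 →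
      pderiv i (pderiv j f) = 0 := fun i j hf =>
    pderiv_eq_zero_of_mem_restrictTotalDegree_zero i (pderiv_mem_restrictTotalDegree j hf)
  intro p hp
  ext1 i
  simp [lameOperator_apply, laplacian_apply, divergence_apply, h _ _ (hp _ trivial)]

end CommSemiring

section CommRing

variable {σ R : Type*} [CommRing R]

theorem pderiv_pderiv_comm (i j : σ) (f : MvPolynomial σ R) :
    pderiv i (pderiv j f) = pderiv j (pderiv i f) := by
  have h : ⁅(pderiv i : Derivation R (MvPolynomial σ R) (MvPolynomial σ R)),
      (pderiv j : Derivation R (MvPolynomial σ R) (MvPolynomial σ R))⁆ = 0 := by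
    classical
    refine derivation_ext fun k => ?_
    simp only [Derivation.commutator_apply, pderiv_X, Pi.single_apply, Derivation.zero_apply]
    split_ifs <;> simp
  simpa [Derivation.commutator_apply, sub_eq_zero] using DFunLike.congr_fun h f

theorem laplacian_pderiv [Fintype σ] (i : σ) (f : MvPolynomial σ R) :
    laplacian (pderiv i f) = pderiv i (laplacian f) := by
  simp only [laplacian_apply, map_sum, pderiv_pderiv_comm i]

-- For `b < 2` the coefficient `b * (b - 1)` vanishes, so the truncated exponent `b - 2` is
-- harmless.
theorem laplacian_X_zero_pow_mul_X_one_pow (a b : ℕ) :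
    laplacian (X 0 ^ (a + 2) * X 1 ^ b : MvPolynomial (Fin 2) R) =
      (((a + 2) * (a + 1) : ℕ) : R) • (X 0 ^ a * X 1 ^ b) +
        ((b * (b - 1) : ℕ) : R) • (X 0 ^ (a + 2) * X 1 ^ (b - 2)) := by
  have h01 : pderiv 0 (X 1 : MvPolynomial (Fin 2) R) = 0 := pderiv_X_of_ne (by decide)
  have h10 : pderiv 1 (X 0 : MvPolynomial (Fin 2) R) = 0 := pderiv_X_of_ne (by decide)
  rw [laplacian_apply, Fin.sum_univ_two]
  simp only [pderiv_mul, pderiv_pow, pderiv_X_self, h01, h10, Derivation.map_natCast, mul_zero,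
    zero_mul, add_zero, zero_add, mul_one]
  rw [show b - 1 - 1 = b - 2 by omega, show a + 2 - 1 - 1 = a by omega,
    show a + 2 - 1 = a + 1 by omega, smul_eq_C_mul, smul_eq_C_mul]
  simp only [Nat.cast_mul, map_mul, map_natCast]
  ring

open Finset in
theorem finrank_restrictTotalDegree [Nontrivial R] [Fintype σ] (n : ℕ) :
    Module.finrank R (restrictTotalDegree σ R n) =
      (n + Fintype.card σ).choose (Fintype.card σ) := by
  classical
  have hS : {s : σ →₀ ℕ | (s.sum fun _ e => e) ≤ n} =
      ↑((range (n + 1)).biUnion fun k => (univ : Finset σ).finsuppAntidiag k) := by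
    ext s
    simp [mem_finsuppAntidiag, Finsupp.sum_fintype]
  rw [restrictTotalDegree, Module.finrank_eq_nat_card_basis (basisRestrictSupport R _), hS,
    Nat.card_coe_set_eq, Set.ncard_coe_finset, card_biUnion]
  · simp_rw [card_finsuppAntidiag_nat_eq_multichoose, card_univ]
    exact Nat.sum_range_multichoose n _
  · intro k _ l _ hkl
    refine disjoint_left.mpr fun s hk hl => hkl ?_
    rw [mem_finsuppAntidiag] at hk hl
    exact hk.1.symm.trans hl.1

end CommRing

section Field

variable {K : Type*} [Field K]

theorem finrank_restrictTotalDegreePi {σ : Type*} [Fintype σ] (n : ℕ) :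
    Module.finrank K (restrictTotalDegreePi σ K n) =
      Fintype.card σ * (n + Fintype.card σ).choose (Fintype.card σ) := by
  rw [Submodule.finrank_pi_univ, Finset.sum_const, finrank_restrictTotalDegree, Finset.card_univ,
    smul_eq_mul]

theorem finrank_restrictTotalDegreePi_fin_two (n : ℕ) :
    Module.finrank K (restrictTotalDegreePi (Fin 2) K n) = (n + 1) * (n + 2) := by
  have h := Nat.add_one_mul_choose_eq (n + 1) 1
  rw [Nat.choose_one_right] at h
  rw [finrank_restrictTotalDegreePi, Fintype.card_fin]
  linarith

variable [CharZero K]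

theorem exists_laplacian_eq_X_zero_pow_mul_X_one_pow (b : ℕ) : ∀ a : ℕ,
    ∃ u ∈ restrictTotalDegree (Fin 2) K (a + b + 2), laplacian u = X 0 ^ a * X 1 ^ b := by
  induction b using Nat.strong_induction_on with
  | _ b ih =>
  intro a
  -- Only `b * (b - 1) • Δw` enters below, so `w = 0` serves when `b < 2`.
  obtain ⟨w, hw, hΔw⟩ : ∃ w ∈ restrictTotalDegree (Fin 2) K (a + b + 2),
      ((b * (b - 1) : ℕ) : K) • laplacian w =
        ((b * (b - 1) : ℕ) : K) • (X 0 ^ (a + 2) * X 1 ^ (b - 2)) := by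
    rcases lt_or_ge b 2 with hb | hb
    · exact ⟨0, zero_mem _, by interval_cases b <;> simp⟩
    · obtain ⟨w, hw, hΔw⟩ := ih (b - 2) (by omega) (a + 2)
      exact ⟨w, by convert hw using 2; omega, by rw [hΔw]⟩
  have hc : (((a + 2) * (a + 1) : ℕ) : K) ≠ 0 := Nat.cast_ne_zero.mpr (by positivity)
  refine ⟨(((a + 2) * (a + 1) : ℕ) : K)⁻¹ •
    (X 0 ^ (a + 2) * X 1 ^ b - ((b * (b - 1) : ℕ) : K) • w), ?_, ?_⟩
  · refine Submodule.smul_mem _ _ (sub_mem ?_ (Submodule.smul_mem _ _ hw))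
    rw [mem_restrictTotalDegree]
    refine (totalDegree_mul _ _).trans ?_
    simp only [totalDegree_X_pow]
    omega
  · rw [map_smul, map_sub, map_smul, hΔw, laplacian_X_zero_pow_mul_X_one_pow,
      add_sub_cancel_right, smul_smul, inv_mul_cancel₀ hc, one_smul]

theorem restrictTotalDegree_le_map_laplacian (n : ℕ) :
    restrictTotalDegree (Fin 2) K n ≤ (restrictTotalDegree (Fin 2) K (n + 2)).map laplacian := by
  intro f hf
  rw [f.as_sum]
  refine Submodule.sum_mem _ fun d hd => ?_
  have hdn : d 0 + d 1 ≤ n := by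
    have := (le_totalDegree hd).trans ((mem_restrictTotalDegree _ _ _).mp hf)
    rwa [Finsupp.sum_fintype _ _ fun _ => rfl, Fin.sum_univ_two] at this
  obtain ⟨u, hu, hΔu⟩ := exists_laplacian_eq_X_zero_pow_mul_X_one_pow (K := K) (d 1) (d 0)
  refine ⟨coeff d f • u, Submodule.smul_mem _ _ ?_, ?_⟩
  · rw [mem_restrictTotalDegree] at hu ⊢
    omega
  · rw [map_smul, hΔu, smul_eq_C_mul, monomial_eq, Finsupp.prod_pow, Fin.prod_univ_two]

theorem restrictTotalDegreePi_le_map_lameOperator {μ lam : K} (hμ : μ ≠ 0)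
    (hlam : lam + 2 * μ ≠ 0) (n : ℕ) :
    restrictTotalDegreePi (Fin 2) K n ≤
      (restrictTotalDegreePi (Fin 2) K (n + 2)).map (lameOperator μ lam) := by
  intro f hf
  choose u hu hΔu using fun i => restrictTotalDegree_le_map_laplacian n (hf i trivial)
  obtain ⟨v, hv, hΔv⟩ := restrictTotalDegree_le_map_laplacian (n + 1)
    (divergence_mem_restrictTotalDegree (n := n + 1) fun i _ => hu i)
  set c : K := -(lam + μ) * μ⁻¹ * (lam + 2 * μ)⁻¹
  have hc : μ * c + (lam + μ) * (μ⁻¹ + c) = 0 :=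
    calc μ * c + (lam + μ) * (μ⁻¹ + c) = c * (lam + 2 * μ) + (lam + μ) * μ⁻¹ := by ring
      _ = 0 := by rw [inv_mul_cancel_right₀ hlam]; ring
  refine ⟨μ⁻¹ • u + c • fun i => pderiv i v, fun i _ => ?_, ?_⟩
  · exact add_mem (Submodule.smul_mem _ _ (hu i))
      (Submodule.smul_mem _ _ (pderiv_mem_restrictTotalDegree i hv))
  have hdiv : divergence (μ⁻¹ • u + c • fun i => pderiv i v) = (μ⁻¹ + c) • divergence u := by
    rw [map_add, map_smul, map_smul, divergence_pderiv, hΔv, add_smul]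
  ext1 i
  rw [lameOperator_apply, hdiv, Pi.add_apply, Pi.smul_apply, Pi.smul_apply, map_add, map_smul,
    map_smul, hΔu, laplacian_pderiv, hΔv, Derivation.map_smul]
  calc μ • (μ⁻¹ • f i + c • pderiv i (divergence u)) +
        (lam + μ) • (μ⁻¹ + c) • pderiv i (divergence u)
      = (μ * μ⁻¹) • f i + (μ * c + (lam + μ) * (μ⁻¹ + c)) • pderiv i (divergence u) := by
        module
    _ = f i := by rw [hc, mul_inv_cancel₀ hμ, one_smul, zero_smul, add_zero]

end Field

end MvPolynomial

theorem polyDivStress_eq_lameOperator (μ lam : ℝ) (p : Fin 2 → MvPolynomial (Fin 2) ℝ) :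
    polyDivStress μ lam p = lameOperator μ lam p := by
  ext1 i
  rw [lameOperator_apply, laplacian_apply, divergence_apply]
  fin_cases i <;>
  · simp only [polyDivStress, polyStress, polyStrain, Fin.sum_univ_two, ← smul_eq_C_mul,
      map_add, Derivation.map_smul, Fin.zero_eta, Fin.mk_one, Fin.reduceEq, reduceIte,
      Fin.isValue, add_zero, map_zero, smul_add, pderiv_pderiv_comm (1 : Fin 2) 0]
    module

/-- the space H̃_{ℓ+1} of vector polynomials of degree ≤ ℓ+1 on ℝ²
with div σ(p) = 0 (μ > 0, λ + μ > 0) has dimension 4ℓ + 6. -/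
theorem stmt_2 (ℓ : ℕ) (μ lam : ℝ) (hμ : 0 < μ) (hlam : 0 < lam + μ) :
    Module.finrank ℝ
      ↥(Submodule.span ℝ
        {p : Fin 2 → MvPolynomial (Fin 2) ℝ |
          (∀ i, (p i).totalDegree ≤ ℓ + 1) ∧ ∀ i, polyDivStress μ lam p i = 0}) =
    4 * ℓ + 6 := by
  have hset : {p : Fin 2 → MvPolynomial (Fin 2) ℝ |
      (∀ i, (p i).totalDegree ≤ ℓ + 1) ∧ ∀ i, polyDivStress μ lam p i = 0} =
      ↑(restrictTotalDegreePi (Fin 2) ℝ (ℓ + 1) ⊓ LinearMap.ker (lameOperator μ lam)) := by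
    ext p
    simp [polyDivStress_eq_lameOperator, _root_.funext_iff, mem_restrictTotalDegree]
  rw [hset, Submodule.span_eq]
  have hrank := Submodule.finrank_inf_ker_add_finrank_map
    (restrictTotalDegreePi (Fin 2) ℝ (ℓ + 1)) (lameOperator μ lam)
  rcases ℓ with _ | m
  · rw [inf_of_le_left (restrictTotalDegreePi_one_le_ker_lameOperator μ lam),
      finrank_restrictTotalDegreePi_fin_two]
  · have hmap : (restrictTotalDegreePi (Fin 2) ℝ (m + 2)).map (lameOperator μ lam) =
        restrictTotalDegreePi (Fin 2) ℝ m :=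
      (map_lameOperator_restrictTotalDegreePi_le μ lam).antisymm
        (restrictTotalDegreePi_le_map_lameOperator hμ.ne' (by linarith) m)
    rw [hmap, finrank_restrictTotalDegreePi_fin_two,
      finrank_restrictTotalDegreePi_fin_two] at hrank
    nlinarith
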